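/- Let X' and Y' be disjoint finite vertex sets of an induced path P, ordered along P, such that each vertex of X' has one or two neighbours in Y', no two vertices of X' have the same neighbourhood in Y', and the nonzero entries of each row of the bipartite adjacency matrix A_P[X',Y'] (rows ordered along P) appear consecutively, with at most one row per block having exactly one nonzero entry. Then the rows of A_P[X',Y'] are linearly independent over GF(2); in particular rank(A_P[X',Y']) = |X'|. -/

import Mathlib

open SimpleGraph
open Classical

/-- Sorted list of the tuple set `S^d`: tuples with entries in {1,3} except
the last entry which is in {1,2,3,4}, of length between 1 and `d`,
listed in lexicographic order. -/
def Tl : ℕ → List (List ℕ)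
  | 0 => []
  | k+1 => [[1]] ++ (Tl k).map (fun a => 1 :: a) ++ [[2], [3]]
            ++ (Tl k).map (fun a => 3 :: a) ++ [[4]]

/-- Strict lexicographic order on tuples (a proper prefix is smaller). -/
def lexLt (a b : List ℕ) : Prop := List.Lex (· < ·) a b

def lexLe (a b : List ℕ) : Prop := a = b ∨ lexLt a b

/-- `v` is the successor of `u` in the lexicographic order on `S^d`. -/
def IsSucc (d : ℕ) (u v : List ℕ) : Prop :=
  v ∈ Tl d ∧ lexLt u v ∧ ∀ w ∈ Tl d, lexLt u w → lexLe v w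

/-- The interval `[a,b]` in `S^d`. -/
def interval (d : ℕ) (a b : List ℕ) : Set (List ℕ) :=
  {c | c ∈ Tl d ∧ lexLe a c ∧ lexLe c b}

/-- `[a,b]` is a proper interval: no interior element has length `l(a)` or `l(b)`. -/
def ProperInterval (d : ℕ) (a b : List ℕ) : Prop :=
  a ∈ Tl d ∧ b ∈ Tl d ∧ lexLe a b ∧
  ∀ c ∈ interval d a b, c ≠ a → c ≠ b →
    c.length ≠ a.length ∧ c.length ≠ b.length

/-- The set of left endpoints of flat steps of the interval `[a,b]`. -/
def flatSteps (d : ℕ) (a b : List ℕ) : Set (List ℕ) :=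
  {c | c ∈ Tl d ∧ lexLe a c ∧ lexLt c b ∧ ∃ v, IsSucc d c v ∧ v.length = c.length}

/-- Vertices of `G_d`: elements of `S^d`, subdivision vertices, and centers. -/
inductive Vtx where
  | elt : List ℕ → Vtx
  | sub : ℕ → Fin 2 → Vtx
  | ctr : ℕ → Vtx
deriving DecidableEq

/-- The path `P_d` as a list of vertices: the elements of `S^d` in order,
with two subdivision vertices between consecutive elements of equal length
and one otherwise. -/
def pathList (d : ℕ) : List Vtx :=
  ((List.range (Tl d).length).zip (Tl d)).flatMap (fun p =>
    Vtx.elt p.2 :: (match (Tl d)[p.1 + 1]? with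
      | none => []
      | some b =>
        if p.2.length = b.length then [Vtx.sub p.1 0, Vtx.sub p.1 1]
        else [Vtx.sub p.1 0]))

/-- `x` and `y` are consecutive in the list `l`. -/
def ChainAdj {α : Type} (l : List α) (x y : α) : Prop :=
  ∃ i, (l[i]? = some x ∧ l[i+1]? = some y) ∨
       (l[i]? = some y ∧ l[i+1]? = some x)

/-- Adjacency from a center vertex. -/
def ctrAdj (d : ℕ) : Vtx → Vtx → Prop
  | Vtx.ctr k, Vtx.ctr m => k ≠ m ∧ 1 ≤ k ∧ k ≤ d ∧ 1 ≤ m ∧ m ≤ d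
  | Vtx.ctr k, Vtx.elt a => 1 ≤ k ∧ k ≤ d ∧ a ∈ Tl d ∧ a.length = k
  | _, _ => False

/-- The vertex set of `G_d`. -/
def VSet (d : ℕ) : Finset Vtx :=
  (pathList d).toFinset ∪ (Finset.Icc 1 d).image Vtx.ctr

def GdAdj (d : ℕ) (x y : Vtx) : Prop :=
  x ≠ y ∧ (ChainAdj (pathList d) x y ∨ ctrAdj d x y ∨ ctrAdj d y x)

/-- The graph `G_d`. -/
def Gd (d : ℕ) : SimpleGraph {x // x ∈ VSet d} where
  Adj x y := GdAdj d x.1 y.1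
  symm := ⟨by
    rintro x y ⟨hne, h⟩
    refine ⟨hne.symm, ?_⟩
    rcases h with ⟨i, hi⟩ | h | h
    · exact Or.inl ⟨i, hi.symm⟩
    · exact Or.inr (Or.inr h)
    · exact Or.inr (Or.inl h)⟩
  loopless := ⟨fun x h => h.1 rfl⟩

/-- A rank decomposition of a graph `G`: a finite cubic tree together with a
bijection from the vertices of `G` to the leaves of the tree. -/
structure RankDecomp {V : Type} [Fintype V] (G : SimpleGraph V) where
  t : Type
  fin : Fintype t
  tree : SimpleGraph t
  conn : tree.Connected
  acyc : tree.IsAcyclic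
  two_le : 2 ≤ Nat.card t
  cubic : ∀ v : t, (tree.neighborSet v).ncard = 1 ∨ (tree.neighborSet v).ncard = 3
  leafEquiv : V ≃ {v : t // (tree.neighborSet v).ncard = 1}

/-- The set of vertices of `G` whose leaf lies on the side of `a` of
the edge `ab` of the decomposition tree. -/
def RankDecomp.side {V : Type} [Fintype V] {G : SimpleGraph V}
    (D : RankDecomp G) (a b : D.t) : Set V :=
  {x | (D.tree.deleteEdges {s(a, b)}).Reachable (D.leafEquiv x).1 a}

/-- The cutrank function of `G`: the GF(2)-rank of the adjacency submatrix
between `X` and its complement. -/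
noncomputable def cutRank {V : Type} [Fintype V] (G : SimpleGraph V) (X : Set V) : ℕ :=
  haveI : Fintype ↥X := Fintype.ofFinite _
  haveI : Fintype ↥(Xᶜ) := Fintype.ofFinite _
  haveI : DecidableRel G.Adj := Classical.decRel _
  Matrix.rank (Matrix.of (fun (x : ↥X) (y : ↥(Xᶜ)) =>
    if G.Adj x.1 y.1 then (1 : ZMod 2) else 0))

/-- The decomposition `D` has width at most `k`. -/
def RankDecomp.WidthLE {V : Type} [Fintype V] {G : SimpleGraph V}
    (D : RankDecomp G) (k : ℕ) : Prop :=
  ∀ a b : D.t, D.tree.Adj a b → cutRank G (D.side a b) ≤ k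

/-- The rank-width of `G`. -/
noncomputable def rankwidth {V : Type} [Fintype V] (G : SimpleGraph V) : ℕ :=
  sInf {k | ∃ D : RankDecomp G, D.WidthLE k}

/-- `l` is an induced path in `G`: its vertices are distinct and two of them
are adjacent in `G` iff they are consecutive on `l`. -/
def IsInducedPathList {V : Type} (G : SimpleGraph V) (l : List V) : Prop :=
  l.Nodup ∧ ∀ x ∈ l, ∀ y ∈ l, (G.Adj x y ↔ ChainAdj l x y)

/-- The diamond: the complete graph on four vertices minus an edge. -/
def diamond : SimpleGraph (Fin 4) := (⊤ : SimpleGraph (Fin 4)).deleteEdges {s(2, 3)}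


/-!
Take a vanishing combination of rows and restrict its support to one block `B`, i.e. one
connected component of `P[X' ∪ Y']`. It suffices to find a column of `Y'` met by exactly one
row of the support. Since neighbours on `P` sit at adjacent positions, the leftmost supported
row `m` of `B` is the only supported row adjacent to any neighbour it has on its left. So we may
assume `m` has no left neighbour in `Y'`, hence exactly one neighbour; symmetrically for the
rightmost supported row `M`. The block condition then gives `m = M`, so the support meets `B` in
`m` alone, and the single neighbour of `m` is met only by `m`.
-/

theorem linearIndependent_ite_of_exists_existsUnique {ι κ R : Type*} [Fintype ι] [Ring R]
    (A : ι → κ → Prop) [∀ i j, Decidable (A i j)]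
    (h : ∀ S : Finset ι, S.Nonempty → ∃ j, ∃! i, i ∈ S ∧ A i j) :
    LinearIndependent R (fun i j => if A i j then (1 : R) else 0) := by
  rw [Fintype.linearIndependent_iff]
  intro g hg
  by_contra! hsupp
  obtain ⟨j, i, ⟨hi, hij⟩, huniq⟩ :=
    h (Finset.univ.filter (g · ≠ 0)) (by simpa [Finset.Nonempty] using hsupp)
  have hcol := congrFun hg j
  rw [Finset.sum_apply, Finset.sum_eq_single i] at hcol
  · simp only [hij, Pi.smul_apply, if_true, smul_eq_mul, mul_one, Pi.zero_apply] at hcol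
    exact (Finset.mem_filter.1 hi).2 hcol
  · intro k _ hki
    have hkj : g k = 0 ∨ ¬ A k j := by
      by_contra! hk
      exact hki (huniq k ⟨Finset.mem_filter.2 ⟨Finset.mem_univ k, hk.1⟩, hk.2⟩)
    rcases hkj with hk | hkj <;> simp [*]
  · simp

theorem IsInducedPathList.idxOf_adj {V : Type} [DecidableEq V] {G : SimpleGraph V}
    {l : List V} (hl : IsInducedPathList G l) {x y : V} (hx : x ∈ l) (hy : y ∈ l)
    (hxy : G.Adj x y) : l.idxOf y = l.idxOf x + 1 ∨ l.idxOf x = l.idxOf y + 1 := by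
  have hidx : ∀ {i v}, l[i]? = some v → l.idxOf v = i := by
    intro i v h
    obtain ⟨hi, rfl⟩ := List.getElem?_eq_some_iff.1 h
    exact hl.1.idxOf_getElem i hi
  obtain ⟨i, ⟨h₁, h₂⟩ | ⟨h₁, h₂⟩⟩ := (hl.2 x hx y hy).1 hxy
  · exact Or.inl (by rw [hidx h₁, hidx h₂])
  · exact Or.inr (by rw [hidx h₁, hidx h₂])

theorem SimpleGraph.induce_connectedComponentMk_eq_of_adj {V : Type} {G : SimpleGraph V}
    {s : Set V} {x x' y : V} (hx : x ∈ s) (hx' : x' ∈ s) (hy : y ∈ s) (hxy : G.Adj x y)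
    (hx'y : G.Adj x' y) :
    (G.induce s).connectedComponentMk ⟨x, hx⟩ = (G.induce s).connectedComponentMk ⟨x', hx'⟩ :=
  ConnectedComponent.eq.2 <|
    (Adj.reachable (G := G.induce s) (u := ⟨x, hx⟩) (v := ⟨y, hy⟩) hxy).trans
      (Adj.reachable (G := G.induce s) (u := ⟨x', hx'⟩) (v := ⟨y, hy⟩) hx'y).symm

section PathLayout

variable {V : Type} {G : SimpleGraph V} {X' Y' : Finset V} (p : V → ℤ)

theorem existsUnique_adj_of_left_neighbor_of_min
    (hp : ∀ x ∈ X', ∀ y ∈ Y', G.Adj x y → p y = p x + 1 ∨ p x = p y + 1)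
    (hinjX : Set.InjOn p X') {S T : Finset V} (hS : S ⊆ X') (hTS : T ⊆ S)
    (hT : ∀ x ∈ S, ∀ x' ∈ T, ∀ y ∈ Y', G.Adj x y → G.Adj x' y → x ∈ T)
    {m y : V} (hm : m ∈ T) (hmin : ∀ x ∈ T, p m ≤ p x) (hy : y ∈ Y') (hmy : G.Adj m y)
    (hleft : p m = p y + 1) :
    ∃! x, x ∈ S ∧ G.Adj x y := by
  refine ⟨m, ⟨hTS hm, hmy⟩, fun x ⟨hx, hxy⟩ => ?_⟩
  have hxT := hT x hx m hm y hy hxy hmy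
  rcases hp x (hS hx) y hy hxy with h | h
  · have := hmin x hxT
    omega
  · exact hinjX (hS hx) (hS (hTS hm)) (by omega)

variable [DecidableRel G.Adj]

theorem card_filter_adj_le_one_of_forall_succ (hinjY : Set.InjOn p Y') {m : V}
    (hright : ∀ y ∈ Y', G.Adj m y → p y = p m + 1) :
    (Y'.filter (fun y => G.Adj m y)).card ≤ 1 := by
  refine Finset.card_le_one.2 fun a ha b hb => ?_
  rw [Finset.mem_filter] at ha hb
  exact hinjY ha.1 hb.1 (by rw [hright a ha.1 ha.2, hright b hb.1 hb.2])

theorem exists_existsUnique_adj_or_card_eq_one_of_min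
    (hp : ∀ x ∈ X', ∀ y ∈ Y', G.Adj x y → p y = p x + 1 ∨ p x = p y + 1)
    (hinjX : Set.InjOn p X') (hinjY : Set.InjOn p Y')
    (hnbr : ∀ x ∈ X', (Y'.filter (fun y => G.Adj x y)).Nonempty)
    {S T : Finset V} (hS : S ⊆ X') (hTS : T ⊆ S)
    (hT : ∀ x ∈ S, ∀ x' ∈ T, ∀ y ∈ Y', G.Adj x y → G.Adj x' y → x ∈ T)
    {m : V} (hm : m ∈ T) (hmin : ∀ x ∈ T, p m ≤ p x) :
    (∃ y ∈ Y', ∃! x, x ∈ S ∧ G.Adj x y) ∨ (Y'.filter (fun y => G.Adj m y)).card = 1 := by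
  by_cases hleft : ∃ y ∈ Y', G.Adj m y ∧ p m = p y + 1
  · obtain ⟨y, hy, hmy, hpy⟩ := hleft
    exact Or.inl ⟨y, hy,
      existsUnique_adj_of_left_neighbor_of_min p hp hinjX hS hTS hT hm hmin hy hmy hpy⟩
  · push Not at hleft
    have hright : ∀ y ∈ Y', G.Adj m y → p y = p m + 1 := fun y hy hmy =>
      (hp m (hS (hTS hm)) y hy hmy).resolve_right (hleft y hy hmy)
    have hle := card_filter_adj_le_one_of_forall_succ p hinjY hright
    have hpos := (hnbr m (hS (hTS hm))).card_pos
    exact Or.inr (by omega)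

variable [DecidableEq V]

theorem exists_existsUnique_adj_of_layout
    (hp : ∀ x ∈ X', ∀ y ∈ Y', G.Adj x y → p y = p x + 1 ∨ p x = p y + 1)
    (hinjX : Set.InjOn p X') (hinjY : Set.InjOn p Y')
    (hnbr : ∀ x ∈ X', (Y'.filter (fun y => G.Adj x y)).Nonempty)
    (hblock : ∀ C : (G.induce (↑(X' ∪ Y') : Set V)).ConnectedComponent,
      (X'.filter (fun x => (Y'.filter (fun y => G.Adj x y)).card = 1 ∧
        ∀ h : x ∈ ↑(X' ∪ Y'),
          (G.induce (↑(X' ∪ Y') : Set V)).connectedComponentMk ⟨x, h⟩ = C)).card ≤ 1)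
    {S : Finset V} (hS : S ⊆ X') (hne : S.Nonempty) :
    ∃ y ∈ Y', ∃! x, x ∈ S ∧ G.Adj x y := by
  obtain ⟨x₀, hx₀⟩ := hne
  have hX'mem : ∀ {x}, x ∈ X' → x ∈ (↑(X' ∪ Y') : Set V) := fun hx => by simp [hx]
  set B := (G.induce (↑(X' ∪ Y') : Set V)).connectedComponentMk ⟨x₀, hX'mem (hS hx₀)⟩
  set T := S.filter fun x => ∀ h : x ∈ (↑(X' ∪ Y') : Set V),
    (G.induce (↑(X' ∪ Y') : Set V)).connectedComponentMk ⟨x, h⟩ = B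
  have hTS : T ⊆ S := Finset.filter_subset _ _
  have hT : ∀ x ∈ S, ∀ x' ∈ T, ∀ y ∈ Y', G.Adj x y → G.Adj x' y → x ∈ T := by
    intro x hx x' hx' y hy hxy hx'y
    refine Finset.mem_filter.2 ⟨hx, fun h => ?_⟩
    rw [induce_connectedComponentMk_eq_of_adj h (hX'mem (hS (hTS hx'))) (by simp [hy]) hxy hx'y]
    exact (Finset.mem_filter.1 hx').2 _
  have hTne : T.Nonempty := ⟨x₀, Finset.mem_filter.2 ⟨hx₀, fun _ => rfl⟩⟩
  obtain ⟨m, hmT, hmin⟩ := T.exists_min_image p hTne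
  obtain ⟨M, hMT, hmax⟩ := T.exists_max_image p hTne
  -- the rightmost row is the leftmost one for the reversed layout `-p`
  obtain hex | hm := exists_existsUnique_adj_or_card_eq_one_of_min p hp hinjX hinjY hnbr hS hTS hT
    hmT hmin
  · exact hex
  obtain hex | hM := exists_existsUnique_adj_or_card_eq_one_of_min (fun v => -p v)
    (fun x hx y hy hxy => by have := hp x hx y hy hxy; omega)
    (fun a ha b hb h => hinjX ha hb (neg_inj.1 h)) (fun a ha b hb h => hinjY ha hb (neg_inj.1 h))
    hnbr hS hTS hT hMT (fun x hx => neg_le_neg (hmax x hx))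
  · exact hex
  have hmem_block : ∀ x ∈ T, (Y'.filter (fun y => G.Adj x y)).card = 1 →
      x ∈ X'.filter (fun x => (Y'.filter (fun y => G.Adj x y)).card = 1 ∧
        ∀ h : x ∈ ↑(X' ∪ Y'),
          (G.induce (↑(X' ∪ Y') : Set V)).connectedComponentMk ⟨x, h⟩ = B) := fun x hx h1 =>
    Finset.mem_filter.2 ⟨hS (hTS hx), h1, (Finset.mem_filter.1 hx).2⟩
  have hmM : m = M :=
    Finset.card_le_one.1 (hblock B) m (hmem_block m hmT hm) M (hmem_block M hMT hM)
  obtain ⟨y, hy⟩ := Finset.card_eq_one.1 hm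
  have hmy := Finset.mem_filter.1 (hy ▸ Finset.mem_singleton_self y)
  refine ⟨y, hmy.1, m, ⟨hTS hmT, hmy.2⟩, fun x ⟨hx, hxy⟩ => ?_⟩
  have hxT := hT x hx m hmT y hmy.1 hxy hmy.2
  have := hmin x hxT
  have := hmax x hxT
  exact hinjX (hS hx) (hS (hTS hmT)) (by subst hmM; omega)

end PathLayout

theorem stmt18_general {V : Type} [DecidableEq V] (G : SimpleGraph V)
    [DecidableRel G.Adj]
    (l : List V) (hl : IsInducedPathList G l)
    (X' Y' : Finset V) (hX : ∀ x ∈ X', x ∈ l) (hY : ∀ y ∈ Y', y ∈ l)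
    (hdeg : ∀ x ∈ X', (Y'.filter (fun y => G.Adj x y)).card = 1 ∨
                      (Y'.filter (fun y => G.Adj x y)).card = 2)
    (hblock : ∀ C : (G.induce (↑(X' ∪ Y') : Set V)).ConnectedComponent,
      (X'.filter (fun x => (Y'.filter (fun y => G.Adj x y)).card = 1 ∧
        ∀ h : x ∈ ↑(X' ∪ Y'),
          (G.induce (↑(X' ∪ Y') : Set V)).connectedComponentMk ⟨x, h⟩ = C)).card ≤ 1) :
    LinearIndependent (ZMod 2)
      (fun (x : ↥X') => (fun (y : ↥Y') => if G.Adj x.1 y.1 then (1 : ZMod 2) else 0)) ∧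
    (Matrix.of (fun (x : ↥X') (y : ↥Y') =>
        if G.Adj x.1 y.1 then (1 : ZMod 2) else 0)).rank = X'.card := by
  set p : V → ℤ := fun v => l.idxOf v
  have hp : ∀ x ∈ X', ∀ y ∈ Y', G.Adj x y → p y = p x + 1 ∨ p x = p y + 1 := by
    intro x hx y hy hxy
    rcases hl.idxOf_adj (hX x hx) (hY y hy) hxy with h | h <;> simp [p, h]
  have hinj : Set.InjOn p {v | v ∈ l} := fun a ha _ _ h =>
    (List.idxOf_inj ha).1 (Nat.cast_injective h)
  have hnbr : ∀ x ∈ X', (Y'.filter (fun y => G.Adj x y)).Nonempty := fun x hx =>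
    Finset.card_pos.1 (by rcases hdeg x hx with h | h <;> omega)
  have hLI : LinearIndependent (ZMod 2)
      (fun (x : ↥X') (y : ↥Y') => if G.Adj x.1 y.1 then (1 : ZMod 2) else 0) := by
    refine linearIndependent_ite_of_exists_existsUnique _ fun S hS => ?_
    obtain ⟨y, hy, x, ⟨hxS, hxy⟩, huniq⟩ := exists_existsUnique_adj_of_layout p hp
      (hinj.mono hX) (hinj.mono hY) hnbr hblock
      (S := S.map (Function.Embedding.subtype _)) (Finset.map_subtype_subset S) hS.map
    obtain ⟨i, hiS, rfl⟩ := Finset.mem_map.1 hxS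
    exact ⟨⟨y, hy⟩, i, ⟨hiS, hxy⟩,
      fun k hk => Subtype.ext (huniq k.1 ⟨Finset.mem_map_of_mem _ hk.1, hk.2⟩)⟩
  exact ⟨hLI, hLI.rank_matrix.trans (Fintype.card_coe X')⟩

/-- If `X'`, `Y'` are disjoint vertex sets of an induced path `P`
such that every vertex of `X'` has one or two neighbours in `Y'`, no two
vertices of `X'` have the same neighbourhood in `Y'`, and within each block
(connected component of `P[X' ∪ Y']`) at most one vertex of `X'` has exactly
one neighbour in `Y'`, then the bipartite adjacency matrix `A_P[X',Y']` has
linearly independent rows over GF(2); in particular its rank is `|X'|`. -/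
theorem stmt18 {V : Type} [Fintype V] [DecidableEq V] (G : SimpleGraph V)
    [DecidableRel G.Adj]
    (l : List V) (hl : IsInducedPathList G l)
    (X' Y' : Finset V) (hX : ∀ x ∈ X', x ∈ l) (hY : ∀ y ∈ Y', y ∈ l)
    (hdisj : Disjoint X' Y')
    (hdeg : ∀ x ∈ X', (Y'.filter (fun y => G.Adj x y)).card = 1 ∨
                      (Y'.filter (fun y => G.Adj x y)).card = 2)
    (hdist : ∀ x ∈ X', ∀ x' ∈ X',
      Y'.filter (fun y => G.Adj x y) = Y'.filter (fun y => G.Adj x' y) → x = x')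
    (hblock : ∀ C : (G.induce (↑(X' ∪ Y') : Set V)).ConnectedComponent,
      (X'.filter (fun x => (Y'.filter (fun y => G.Adj x y)).card = 1 ∧
        ∀ h : x ∈ ↑(X' ∪ Y'),
          (G.induce (↑(X' ∪ Y') : Set V)).connectedComponentMk ⟨x, h⟩ = C)).card ≤ 1) :
    LinearIndependent (ZMod 2)
      (fun (x : ↥X') => (fun (y : ↥Y') => if G.Adj x.1 y.1 then (1 : ZMod 2) else 0)) ∧
    (Matrix.of (fun (x : ↥X') (y : ↥Y') =>
        if G.Adj x.1 y.1 then (1 : ZMod 2) else 0)).rank = X'.card :=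
  stmt18_general G l hl X' Y' hX hY hdeg hblock
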